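/- arXiv:math/0606440 — 5 statements merged into one kernel-verified Lean document; each statement's English description precedes it below -/
import Mathlib

section
/- Let p_n be a monic real polynomial of degree n with simple real zeros and let p_{n−1} be a monic real polynomial of degree n−1 with simple real zeros, such that the zeros of p_{n−1} and p_n interlace and all zeros of both polynomials lie in [m,M]. Then for every z ∈ ℂ with |z| > max(|m|,|M|), one has |p_{n−1}(z)/p_n(z)| ≥ 1/(2|z|). -/
open Filter Topology Polynomial

/-- Argument in `[0, 2π)`. -/
noncomputable def argNN (z : ℂ) : ℝ :=
  if Complex.arg z < 0 then Complex.arg z + 2 * Real.pi else Complex.arg z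

/-- Square root with branch cut along the positive real axis:
`ρ e^{iθ} ↦ ρ^{1/2} e^{iθ/2}` with `θ ∈ [0, 2π)`. -/
noncomputable def csqrt (z : ℂ) : ℂ :=
  ((‖z‖ ^ ((1 : ℝ) / 2) : ℝ) : ℂ) * Complex.exp (Complex.I * (argNN z : ℂ) / 2)

/-- Principal cube root: `ρ e^{iθ} ↦ ρ^{1/3} e^{iθ/3}` with `θ ∈ (−π, π]`. -/
noncomputable def ccbrt (z : ℂ) : ℂ :=
  ((‖z‖ ^ ((1 : ℝ) / 3) : ℝ) : ℂ) * Complex.exp (Complex.I * (Complex.arg z : ℂ) / 3)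

/-- `ω₃ = e^{2πi/3}`. -/
noncomputable def ω₃ : ℂ := Complex.exp (2 * (Real.pi : ℂ) * Complex.I / 3)

/-- The function `φ` from the paper. -/
noncomputable def phi (z : ℂ) : ℂ :=
  (27 / 4) * ((3 * ω₃ / 2) * ccbrt z *
    (ω₃ * ccbrt (-1 + csqrt (1 - z)) + ccbrt (-1 - csqrt (1 - z))) - 1)

/-- The density `w` of the measure `υ_{[0,1]}`. -/
noncomputable def w (x : ℝ) : ℝ :=
  (Real.sqrt 3 / (4 * Real.pi)) *
    (((1 + Real.sqrt (1 - x)) ^ ((1 : ℝ) / 3) + (1 - Real.sqrt (1 - x)) ^ ((1 : ℝ) / 3)) /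
      (x ^ ((2 : ℝ) / 3) * Real.sqrt (1 - x)))

/-!
Write `q / p` in partial fractions, `q(z)/p(z) = ∑ᵢ cᵢ / (z - yᵢ)` with `cᵢ = q(yᵢ) / p'(yᵢ)`.
Interlacing makes every `cᵢ ≥ 0`: pair the factor `yᵢ - y'ₖ` of `q(yᵢ)` with the factor
`yᵢ - yₖ` of `p'(yᵢ)` when `k < i` and with `yᵢ - yₖ₊₁` otherwise; the two have the same sign.
Since `q` is monic of degree `n - 1`, comparing coefficients of `Xⁿ⁻¹` gives `∑ᵢ cᵢ = 1`.
Finally, for real `|t| < |z|` one has `Re (z / (z - t)) ≥ 1/2`, so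
`|z q(z)/p(z)| ≥ Re (z q(z)/p(z)) ≥ 1/2`.
-/

open Finset Lagrange

theorem one_half_le_re_div_sub_ofReal {z : ℂ} {t : ℝ} (h : |t| < ‖z‖) :
    1 / 2 ≤ (z / (z - t)).re := by
  have hzt : z - t ≠ 0 := by
    rintro hzt
    rw [sub_eq_zero.1 hzt, Complex.norm_real, Real.norm_eq_abs] at h
    exact lt_irrefl _ h
  have ht : t ^ 2 < z.re * z.re + z.im * z.im := by
    rw [← sq_abs, ← Complex.normSq_apply, ← Complex.sq_norm]
    exact pow_lt_pow_left₀ h (abs_nonneg t) two_ne_zero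
  rw [Complex.div_re, ← add_div, le_div_iff₀ (Complex.normSq_pos.2 hzt)]
  simp only [Complex.normSq_apply, Complex.sub_re, Complex.sub_im, Complex.ofReal_re,
    Complex.ofReal_im, sub_zero]
  nlinarith

theorem one_div_two_mul_norm_le_norm_sum_div_sub {ι : Type*} {s : Finset ι} {c t : ι → ℝ}
    (hc : ∀ i ∈ s, 0 ≤ c i) (hsum : ∑ i ∈ s, c i = 1) {z : ℂ} (ht : ∀ i ∈ s, |t i| < ‖z‖) :
    1 / (2 * ‖z‖) ≤ ‖∑ i ∈ s, (c i : ℂ) / (z - t i)‖ := by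
  obtain ⟨i, hi⟩ := nonempty_of_sum_ne_zero (hsum.trans_ne one_ne_zero)
  have hz : 0 < ‖z‖ := (abs_nonneg _).trans_lt (ht i hi)
  have hre : 1 / 2 ≤ (z * ∑ i ∈ s, (c i : ℂ) / (z - t i)).re := by
    calc (1 / 2 : ℝ) = ∑ i ∈ s, c i * (1 / 2) := by rw [← sum_mul, hsum, one_mul]
      _ ≤ ∑ i ∈ s, c i * (z / (z - t i)).re :=
        sum_le_sum fun i hi => mul_le_mul_of_nonneg_left
          (one_half_le_re_div_sub_ofReal (ht i hi)) (hc i hi)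
      _ = _ := by
        rw [mul_sum, Complex.re_sum]
        refine sum_congr rfl fun i _ => ?_
        rw [mul_div_left_comm, Complex.re_ofReal_mul]
  have hnorm := (hre.trans (Complex.re_le_norm _)).trans_eq (norm_mul _ _)
  rw [div_le_iff₀ (by positivity)]
  linarith

section Nodal

variable {F : Type*} [Field F] {ι : Type*} {s : Finset ι} {v : ι → F}

theorem Polynomial.Monic.eq_nodal {p : F[X]} (hp : p.Monic) (hdeg : p.natDegree = #s)
    (hvs : Set.InjOn v s) (hroot : ∀ i ∈ s, p.eval (v i) = 0) : p = nodal s v := by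
  refine eq_of_degree_sub_lt_of_eval_index_eq s hvs ?_ fun i hi => by
    rw [hroot i hi, eval_nodal_at_node hi]
  rw [← hdeg, ← degree_eq_natDegree hp.ne_zero]
  exact degree_sub_lt_left (by rw [degree_nodal, degree_eq_natDegree hp.ne_zero, hdeg])
    hp.ne_zero (by rw [hp.leadingCoeff, nodal_monic.leadingCoeff])

theorem aeval_div_aeval_nodal [DecidableEq ι] {K : Type*} [Field K] [Algebra F K]
    (hvs : Set.InjOn v s) {q : F[X]} (hq : q.degree < #s) {z : K}
    (hz : ∀ i ∈ s, z ≠ algebraMap F K (v i)) :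
    aeval z q / aeval z (nodal s v) = ∑ i ∈ s,
      algebraMap F K (q.eval (v i) / ∏ j ∈ s.erase i, (v i - v j)) /
        (z - algebraMap F K (v i)) := by
  set f := algebraMap F K
  have hvs' : Set.InjOn (f ∘ v) s := (FaithfulSMul.algebraMap_injective F K).comp_injOn hvs
  have hmap : (nodal s v).map f = nodal s (f ∘ v) := by
    simp [nodal, Polynomial.map_prod]
  have hz' : ∀ i ∈ s, z ≠ (f ∘ v) i := hz
  rw [aeval_def, aeval_def, eval₂_eq_eval_map, eval₂_eq_eval_map, hmap,
    eq_interpolate hvs' ((degree_map q f).trans_lt hq), eval_interpolate_not_at_node _ hz',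
    mul_div_cancel_left₀ _ (eval_nodal_not_at_node hz')]
  refine sum_congr rfl fun i _ => ?_
  simp only [nodalWeight, Function.comp_apply, prod_inv_distrib, eval_map, eval₂_at_apply,
    div_eq_mul_inv, map_mul, map_inv₀, map_prod, map_sub]
  ring

end Nodal

theorem Finset.prod_range_erase_eq_prod_range_pred {M : Type*} [CommMonoid M] (f : ℕ → M)
    {n i : ℕ} (hi : i < n) :
    ∏ j ∈ (range n).erase i, f j = ∏ k ∈ range (n - 1), f (if k < i then k else k + 1) := by
  refine (prod_nbij' (fun k => if k < i then k else k + 1) (fun j => if j < i then j else j - 1)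
    ?_ ?_ ?_ ?_ fun _ _ => rfl).symm <;>
  · intro k hk
    simp only [mem_range, mem_erase] at hk ⊢
    split_ifs <;> omega

theorem div_prod_sub_nonneg_of_interlace {n i : ℕ} {y y' : ℕ → ℝ}
    (hy : StrictMonoOn y (Set.Iio n))
    (hinterlace : ∀ j < n - 1, y j < y' j ∧ y' j < y (j + 1)) (hi : i < n) :
    0 ≤ (∏ k ∈ range (n - 1), (y i - y' k)) / ∏ j ∈ (range n).erase i, (y i - y j) := by
  rw [prod_range_erase_eq_prod_range_pred _ hi, ← prod_div_distrib]
  refine prod_nonneg fun k hk => ?_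
  have hk : k < n - 1 := mem_range.1 hk
  obtain ⟨hyk, hyk'⟩ := hinterlace k hk
  split_ifs with hki
  · have : y (k + 1) ≤ y i := (hy.le_iff_le (by omega : k + 1 < n) hi).2 hki
    exact div_nonneg (by linarith) (by linarith [hy (by omega : k < n) hi hki])
  · have : y i ≤ y k := (hy.le_iff_le hi (by omega : k < n)).2 (by omega)
    exact div_nonneg_of_nonpos (by linarith)
      (by linarith [hy hi (by omega : k + 1 < n) (by omega : i < k + 1)])

theorem ratio_bound_below_general (n : ℕ) (hn : 1 ≤ n) (p q : Polynomial ℝ)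
    (hp : p.Monic) (hpdeg : p.natDegree = n)
    (hq : q.Monic) (hqdeg : q.natDegree = n - 1)
    (y y' : ℕ → ℝ)
    (hyroot : ∀ j < n, p.eval (y j) = 0)
    (hymono : ∀ j k : ℕ, j < k → k < n → y j < y k)
    (hy'root : ∀ j < n - 1, q.eval (y' j) = 0)
    (hy'mono : ∀ j k : ℕ, j < k → k < n - 1 → y' j < y' k)
    (hinterlace : ∀ j < n - 1, y j < y' j ∧ y' j < y (j + 1))
    (m M : ℝ)
    (hyIn : ∀ j < n, y j ∈ Set.Icc m M) :
    ∀ z : ℂ, max |m| |M| < ‖z‖ →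
      1 / (2 * ‖z‖) ≤ ‖Polynomial.aeval z q / Polynomial.aeval z p‖ := by
  have hy : StrictMonoOn y (Set.Iio n) := fun j _ k hk hjk => hymono j k hjk hk
  have hy' : StrictMonoOn y' (Set.Iio (n - 1)) := fun j _ k hk hjk => hy'mono j k hjk hk
  have hinj : Set.InjOn y (range n) := by rw [coe_range]; exact hy.injOn
  have hp_eq : p = nodal (range n) y :=
    hp.eq_nodal (by rw [hpdeg, card_range]) hinj fun j hj => hyroot j (mem_range.1 hj)
  have hq_eq : q = nodal (range (n - 1)) y' :=
    hq.eq_nodal (by rw [hqdeg, card_range]) (by rw [coe_range]; exact hy'.injOn)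
      fun j hj => hy'root j (mem_range.1 hj)
  have hq_lt : q.degree < #(range n) := by
    rw [card_range, degree_eq_natDegree hq.ne_zero, hqdeg]
    exact_mod_cast Nat.sub_lt hn one_pos
  intro z hz
  have hyz : ∀ j ∈ range n, |y j| < ‖z‖ := fun j hj => by
    obtain ⟨hmy, hyM⟩ := hyIn j (mem_range.1 hj)
    exact (abs_le_max_abs_abs hmy hyM).trans_lt hz
  have hz_ne : ∀ j ∈ range n, z ≠ algebraMap ℝ ℂ (y j) := by
    rintro j hj rfl
    simpa using hyz j hj
  rw [hp_eq, aeval_div_aeval_nodal hinj hq_lt hz_ne]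
  simp only [Complex.coe_algebraMap]
  refine one_div_two_mul_norm_le_norm_sum_div_sub (fun i hi => ?_) ?_ hyz
  · rw [hq_eq, eval_nodal]
    exact div_prod_sub_nonneg_of_interlace hy hinterlace (mem_range.1 hi)
  · rw [← coeff_eq_sum hinj hq_lt, card_range, ← hqdeg]
    exact hq.coeff_natDegree

/-- under the same interlacing hypotheses, for `|z| > max(|m|, |M|)` one has
`|q(z)/p(z)| ≥ 1/(2|z|)`. -/
theorem ratio_bound_below (n : ℕ) (hn : 1 ≤ n) (p q : Polynomial ℝ)
    (hp : p.Monic) (hpdeg : p.natDegree = n)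
    (hq : q.Monic) (hqdeg : q.natDegree = n - 1)
    (y y' : ℕ → ℝ)
    (hyroot : ∀ j < n, p.eval (y j) = 0)
    (hymono : ∀ j k : ℕ, j < k → k < n → y j < y k)
    (hy'root : ∀ j < n - 1, q.eval (y' j) = 0)
    (hy'mono : ∀ j k : ℕ, j < k → k < n - 1 → y' j < y' k)
    (hinterlace : ∀ j < n - 1, y j < y' j ∧ y' j < y (j + 1))
    (m M : ℝ) (hmM : m ≤ M)
    (hyIn : ∀ j < n, y j ∈ Set.Icc m M)
    (hy'In : ∀ j < n - 1, y' j ∈ Set.Icc m M) :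
    ∀ z : ℂ, max |m| |M| < ‖z‖ →
      1 / (2 * ‖z‖) ≤ ‖Polynomial.aeval z q / Polynomial.aeval z p‖ :=
  ratio_bound_below_general n hn p q hp hpdeg hq hqdeg y y' hyroot hymono hy'root hy'mono hinterlace
    m M hyIn
end

section
/- The function φ satisfies the algebraic identity z·φ(z) = (1 + 4φ(z)/27)³ for every z ∈ ℂ \ [0,1]. -/
open Filter Topology Polynomial

/-!
With `s = √(1 - z)`, `a = ∛(-1 + s)`, `b = ∛(-1 - s)` one has `a³ + b³ = -2` and
`(-1 + s)(-1 - s) = z`. The chosen branches make `Im s ≥ 0`, and `s` can only be real when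
`z < 0`, where `s > 1`; so `arg (-1 + s) + arg (-1 - s)` stays in `(-π, π]` and `ab = ∛z`.
Then `X = 1 + 4φ(z)/27 = (3ω/2) ∛z (ωa + b)`, and Cardano's relation for `ωa + b` gives
`X³ = (27/4) z (X - 1) = z φ(z)`.
-/

open Complex

lemma argNN_nonneg (z : ℂ) : 0 ≤ argNN z := by
  unfold argNN
  split_ifs <;> linarith [neg_pi_lt_arg z, Real.pi_pos]

lemma argNN_lt_two_pi (z : ℂ) : argNN z < 2 * Real.pi := by
  unfold argNN
  split_ifs <;> linarith [arg_le_pi z, Real.pi_pos]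

lemma exp_argNN_mul_I (z : ℂ) : exp (argNN z * I) = exp (arg z * I) := by
  unfold argNN
  split_ifs
  · rw [ofReal_add, add_mul, exp_add, ofReal_mul, ofReal_ofNat, exp_two_pi_mul_I, mul_one]
  · rfl

lemma norm_rpow_mul_exp_pow {n : ℕ} (hn : n ≠ 0) (z : ℂ) (t : ℝ)
    (ht : exp (t * I) = exp (arg z * I)) :
    (((‖z‖ ^ ((1 : ℝ) / n) : ℝ) : ℂ) * exp (I * t / n)) ^ n = z := by
  rw [mul_pow, ← exp_nat_mul, ← ofReal_pow, one_div, Real.rpow_inv_natCast_pow (norm_nonneg z) hn,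
    show (n : ℂ) * (I * t / n) = t * I by field_simp, ht, norm_mul_exp_arg_mul_I]

lemma ccbrt_pow_three (z : ℂ) : ccbrt z ^ 3 = z := by
  simpa [ccbrt, one_div] using norm_rpow_mul_exp_pow (n := 3) (by norm_num) z (arg z) rfl

lemma csqrt_sq (z : ℂ) : csqrt z ^ 2 = z := by
  simpa [csqrt, one_div] using
    norm_rpow_mul_exp_pow (n := 2) (by norm_num) z (argNN z) (exp_argNN_mul_I z)

lemma ccbrt_mul {u v : ℂ} (hu : u ≠ 0) (hv : v ≠ 0)
    (h : arg u + arg v ∈ Set.Ioc (-Real.pi) Real.pi) :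
    ccbrt (u * v) = ccbrt u * ccbrt v := by
  unfold ccbrt
  rw [arg_mul hu hv h, norm_mul, Real.mul_rpow (norm_nonneg u) (norm_nonneg v), ofReal_mul,
    mul_mul_mul_comm, ← exp_add]
  push_cast
  ring_nf

lemma ω₃_pow_three : ω₃ ^ 3 = 1 := by
  simpa [ω₃] using (isPrimitiveRoot_exp 3 (by norm_num)).pow_eq_one

lemma csqrt_eq_polar (z : ℂ) :
    csqrt z = ((‖z‖ ^ ((1 : ℝ) / 2) : ℝ) : ℂ) * exp ((argNN z / 2 : ℝ) * I) := by
  rw [csqrt]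
  push_cast
  ring_nf

lemma csqrt_im_nonneg (z : ℂ) : 0 ≤ (csqrt z).im := by
  rw [csqrt_eq_polar, im_ofReal_mul, exp_ofReal_mul_I_im]
  exact mul_nonneg (by positivity) (Real.sin_nonneg_of_nonneg_of_le_pi
    (by linarith [argNN_nonneg z]) (by linarith [argNN_lt_two_pi z]))

lemma csqrt_re_nonneg_of_im_eq_zero {z : ℂ} (h : (csqrt z).im = 0) : 0 ≤ (csqrt z).re := by
  rw [csqrt_eq_polar, im_ofReal_mul, exp_ofReal_mul_I_im] at h
  rw [csqrt_eq_polar, re_ofReal_mul, exp_ofReal_mul_I_re]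
  rcases mul_eq_zero.1 h with hr | hsin
  · rw [hr, zero_mul]
  · rw [Real.sin_eq_zero_iff_of_lt_of_lt (by linarith [argNN_nonneg z, Real.pi_pos])
      (by linarith [argNN_lt_two_pi z])] at hsin
    rw [hsin, Real.cos_zero, mul_one]
    positivity

lemma arg_neg_one_add_add_arg_neg_one_sub_mem_Ioc {s : ℂ} (him : 0 ≤ s.im)
    (hre : s.im = 0 → 1 < s.re) :
    arg (-1 + s) + arg (-1 - s) ∈ Set.Ioc (-Real.pi) Real.pi := by
  rcases him.lt_or_eq with him | him
  · have hu : 0 ≤ arg (-1 + s) := arg_nonneg_iff.2 (by simpa using him.le)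
    have hv : arg (-1 - s) < 0 := arg_neg_iff.2 (by simpa using him)
    constructor <;> linarith [arg_le_pi (-1 + s), neg_pi_lt_arg (-1 - s)]
  · have hu : arg (-1 + s) = 0 :=
      arg_eq_zero_iff.2 ⟨by simpa using (hre him.symm).le, by simpa using him.symm⟩
    simpa [hu] using arg_mem_Ioc (-1 - s)

lemma one_lt_csqrt_one_sub_re {z : ℂ} (hz : z ∉ ofReal '' Set.Icc 0 1)
    (him : (csqrt (1 - z)).im = 0) : 1 < (csqrt (1 - z)).re := by
  set r := (csqrt (1 - z)).re
  have hr : 0 ≤ r := csqrt_re_nonneg_of_im_eq_zero him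
  have hz_eq : z = ((1 - r ^ 2 : ℝ) : ℂ) := by
    have hs : csqrt (1 - z) = r := ext rfl him
    have hsq := csqrt_sq (1 - z)
    rw [hs] at hsq
    push_cast
    linear_combination hsq
  by_contra hr1
  exact hz ⟨1 - r ^ 2, ⟨by nlinarith, by nlinarith⟩, hz_eq.symm⟩

/-- `t = ωa + b` satisfies `t³ = a³ + b³ + 3ωab t = 3ωc t - 2`; this is that cubic rescaled
by `X = (3ω/2) c t`. -/
lemma cardano_cube_eq {K : Type*} [Field K] [CharZero K] {a b c ω : K}
    (hab : a ^ 3 + b ^ 3 = -2) (hc : a * b = c) (hω : ω ^ 3 = 1) :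
    (3 * ω / 2 * c * (ω * a + b)) ^ 3 = 27 / 4 * c ^ 3 * (3 * ω / 2 * c * (ω * a + b) - 1) := by
  linear_combination (27 / 8 * c ^ 3) * hab + (81 / 8 * ω * c ^ 3 * (ω * a + b)) * hc
    + (27 / 8 * c ^ 3 * (a ^ 3 + (ω * a + b) ^ 3)) * hω

/-- `z * phi z = (1 + 4 * phi z / 27)^3` for every `z` off the branch cut `[0,1]`. -/
theorem phi_algebraic_identity :
    ∀ z : ℂ, z ∉ (Complex.ofReal '' Set.Icc (0 : ℝ) 1) →
      z * phi z = (1 + 4 * phi z / 27) ^ 3 := by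
  intro z hz
  set s := csqrt (1 - z)
  have hz0 : z ≠ 0 := fun h => hz ⟨0, by norm_num, by simp [h]⟩
  have hs : (-1 + s) * (-1 - s) = z := by linear_combination -csqrt_sq (1 - z)
  have hmul : ccbrt (-1 + s) * ccbrt (-1 - s) = ccbrt z := by
    rw [← hs] at hz0 ⊢
    exact (ccbrt_mul (left_ne_zero_of_mul hz0) (right_ne_zero_of_mul hz0)
      (arg_neg_one_add_add_arg_neg_one_sub_mem_Ioc (csqrt_im_nonneg _)
        (one_lt_csqrt_one_sub_re hz))).symm
  have key := cardano_cube_eq (by rw [ccbrt_pow_three, ccbrt_pow_three]; ring) hmul ω₃_pow_three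
  rw [ccbrt_pow_three] at key
  unfold phi
  linear_combination -key
end

section
/- Near the branch point 0, the logarithmic derivative of φ satisfies |φ'(εe^{iθ})/φ(εe^{iθ})| = O(ε^{−2/3}) as ε → 0⁺: there exist constants C > 0 and ε₀ > 0 such that for all ε ∈ (0,ε₀) and all θ ∈ (0,2π), |φ'(εe^{iθ})/φ(εe^{iθ})| ≤ C·ε^{−2/3}. -/
open Filter Topology Polynomial

/-!
Off the real axis, `φ` agrees near `z` with `27/4 · (3ω₃/2 · z^{1/3} · S(z) - 1)` written with
principal powers, where `S = a (-1 + √(1-z))^{1/3} + b (-1 - √(1-z))^{1/3}` and `{a, b} = {1, ω₃}`.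
Since `(-1 + √(1-z)) (-1 - √(1-z)) = z` and the second factor has modulus between `1` and `3`, the
first cube root has modulus `≍ |z|^{1/3}`. Hence `S` is bounded and `S' = O(|z|^{-2/3})`, so
`φ' = O(|z|^{-2/3})`, while `|φ| ≥ 1` near `0` because the `z^{1/3}` term is small. On the negative
real axis the two branches differ and `φ` is discontinuous, so `deriv φ` takes its junk value `0`.
-/

open Complex
open scoped Real

lemma cpow_ofReal_eq_mul_exp {z : ℂ} (hz : z ≠ 0) (r : ℝ) :
    z ^ (r : ℂ) = ↑(‖z‖ ^ r) * exp (I * arg z * r) := by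
  rw [cpow_def_of_ne_zero hz, log, add_mul, exp_add, Real.rpow_def_of_pos (norm_pos_iff.2 hz),
    ofReal_exp]
  push_cast
  ring_nf

lemma continuousWithinAt_cpow_const_of_re_neg_of_im_zero {u : ℂ} (hre : u.re < 0)
    (him : u.im = 0) (c : ℂ) : ContinuousWithinAt (· ^ c) {w | 0 ≤ w.im} u := by
  have hu : u ≠ 0 := by rintro rfl; simp at hre
  have hexp : ContinuousWithinAt (fun w => exp (log w * c)) {w | 0 ≤ w.im} u :=
    continuous_exp.continuousAt.comp_continuousWithinAt
      ((continuousWithinAt_log_of_re_neg_of_im_zero hre him).mul continuousWithinAt_const)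
  refine hexp.congr_of_eventuallyEq ?_ (cpow_def_of_ne_zero hu c)
  filter_upwards [nhdsWithin_le_nhds (isOpen_ne.mem_nhds hu)] with w hw
  exact cpow_def_of_ne_zero hw c

lemma hasDerivAt_cpow_inv_nat {n : ℕ} (hn : n ≠ 0) {u : ℂ} (hu : u ∈ slitPlane) :
    HasDerivAt (· ^ (n⁻¹ : ℂ)) (n * (u ^ (n⁻¹ : ℂ)) ^ (n - 1))⁻¹ u := by
  refine (hasStrictDerivAt_cpow_const hu).hasDerivAt.congr_deriv ?_
  have hr : (u ^ (n⁻¹ : ℂ)) ^ n = u := cpow_nat_inv_pow u hn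
  rw [cpow_sub _ _ (slitPlane_ne_zero hu), cpow_one]
  generalize u ^ (n⁻¹ : ℂ) = r at hr ⊢
  subst hr
  have hr₀ : r ≠ 0 := by
    rintro rfl
    exact slitPlane_ne_zero hu (zero_pow hn)
  obtain ⟨m, rfl⟩ := Nat.exists_eq_add_one_of_ne_zero hn
  field_simp
  simp [pow_succ, mul_comm]

lemma hasDerivAt_cpow_inv_three {u : ℂ} (hu : u ∈ slitPlane) :
    HasDerivAt (· ^ (3⁻¹ : ℂ)) (3 * (u ^ (3⁻¹ : ℂ)) ^ 2)⁻¹ u := by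
  simpa using hasDerivAt_cpow_inv_nat three_ne_zero hu

lemma norm_cpow_inv_three_pow (u : ℂ) : ‖u ^ (3⁻¹ : ℂ)‖ ^ 3 = ‖u‖ := by
  rw [← norm_pow, cpow_ofNat_inv_pow]

lemma norm_cpow_inv_three_le {u : ℂ} {r : ℝ} (hr : 0 ≤ r) (hu : ‖u‖ ≤ r ^ 3) :
    ‖u ^ (3⁻¹ : ℂ)‖ ≤ r := by
  rwa [← pow_le_pow_iff_left₀ (norm_nonneg _) hr three_ne_zero, norm_cpow_inv_three_pow]

lemma le_norm_cpow_inv_three {u : ℂ} {r : ℝ} (hr : 0 ≤ r) (hu : r ^ 3 ≤ ‖u‖) :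
    r ≤ ‖u ^ (3⁻¹ : ℂ)‖ := by
  rwa [← pow_le_pow_iff_left₀ hr (norm_nonneg _) three_ne_zero, norm_cpow_inv_three_pow]

lemma inv_norm_cpow_inv_three_sq (z : ℂ) :
    (‖z ^ (3⁻¹ : ℂ)‖ ^ 2)⁻¹ = ‖z‖ ^ (-(2 : ℝ) / 3) := by
  rw [show (3⁻¹ : ℂ) = ((3⁻¹ : ℝ) : ℂ) by push_cast; rfl, norm_cpow_real, ← Real.rpow_natCast,
    ← Real.rpow_mul (norm_nonneg _), ← Real.rpow_neg (norm_nonneg _)]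
  norm_num

lemma ccbrt_eq_cpow {z : ℂ} (hz : z ≠ 0) : ccbrt z = z ^ (3⁻¹ : ℂ) := by
  have := cpow_ofReal_eq_mul_exp hz 3⁻¹
  push_cast at this
  rw [ccbrt, this, one_div, div_eq_mul_inv]

lemma csqrt_eq_cpow_of_im_nonneg {z : ℂ} (h : 0 ≤ z.im) : csqrt z = z ^ (2⁻¹ : ℂ) := by
  rcases eq_or_ne z 0 with rfl | hz
  · simp [csqrt]
  have := cpow_ofReal_eq_mul_exp hz 2⁻¹
  push_cast at this
  rw [csqrt, argNN, if_neg (not_lt.2 (arg_nonneg_iff.2 h)), this, one_div, div_eq_mul_inv]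

lemma csqrt_eq_neg_cpow_of_im_neg {z : ℂ} (h : z.im < 0) : csqrt z = -z ^ (2⁻¹ : ℂ) := by
  have hz : z ≠ 0 := by rintro rfl; simp at h
  have := cpow_ofReal_eq_mul_exp hz 2⁻¹
  push_cast at this
  rw [csqrt, argNN, if_pos (arg_neg_iff.2 h), this, one_div]
  push_cast
  rw [show I * (arg z + 2 * π) / 2 = I * arg z * 2⁻¹ + π * I by ring, exp_add, exp_pi_mul_I]
  ring

lemma norm_ω₃ : ‖ω₃‖ = 1 := by
  rw [ω₃, norm_exp]
  simp

lemma ω₃_ne_one : ω₃ ≠ 1 := by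
  simpa [ω₃] using (isPrimitiveRoot_exp 3 three_ne_zero).ne_one (by norm_num)

noncomputable def sqrtOneSub (z : ℂ) : ℂ := (1 - z) ^ (2⁻¹ : ℂ)

noncomputable def innerSum (a b z : ℂ) : ℂ :=
  a * (-1 + sqrtOneSub z) ^ (3⁻¹ : ℂ) + b * (-1 - sqrtOneSub z) ^ (3⁻¹ : ℂ)

-- On the upper half-plane `csqrt (1 - z)` is minus the principal root, which swaps the roles of
-- the two inner cube roots: hence the coefficients `a`, `b`.
noncomputable def phiBranch (a b z : ℂ) : ℂ :=
  27 / 4 * (3 * ω₃ / 2 * z ^ (3⁻¹ : ℂ) * innerSum a b z - 1)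

lemma sqrtOneSub_sq (z : ℂ) : sqrtOneSub z ^ 2 = 1 - z :=
  cpow_ofNat_inv_pow _ 2

lemma neg_one_add_sqrtOneSub_mul (z : ℂ) : (-1 + sqrtOneSub z) * (-1 - sqrtOneSub z) = z := by
  linear_combination -sqrtOneSub_sq z

lemma neg_one_add_sqrtOneSub_ne_zero {z : ℂ} (hz : z ≠ 0) : -1 + sqrtOneSub z ≠ 0 :=
  left_ne_zero_of_mul (by rwa [neg_one_add_sqrtOneSub_mul])

lemma neg_one_sub_sqrtOneSub_ne_zero {z : ℂ} (hz : z ≠ 0) : -1 - sqrtOneSub z ≠ 0 :=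
  right_ne_zero_of_mul (by rwa [neg_one_add_sqrtOneSub_mul])

lemma phi_eq_phiBranch_of_im_nonpos {z : ℂ} (hz : z ≠ 0) (him : z.im ≤ 0) :
    phi z = phiBranch ω₃ 1 z := by
  rw [phi, csqrt_eq_cpow_of_im_nonneg (by simpa using him), ← sqrtOneSub, ccbrt_eq_cpow hz,
    ccbrt_eq_cpow (neg_one_add_sqrtOneSub_ne_zero hz),
    ccbrt_eq_cpow (neg_one_sub_sqrtOneSub_ne_zero hz), phiBranch, innerSum, one_mul]

lemma phi_eq_phiBranch_of_im_pos {z : ℂ} (him : 0 < z.im) : phi z = phiBranch 1 ω₃ z := by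
  have hz : z ≠ 0 := by rintro rfl; simp at him
  rw [phi, csqrt_eq_neg_cpow_of_im_neg (by simpa using him), ← sqrtOneSub, ccbrt_eq_cpow hz,
    ← sub_eq_add_neg, sub_neg_eq_add, ccbrt_eq_cpow (neg_one_add_sqrtOneSub_ne_zero hz),
    ccbrt_eq_cpow (neg_one_sub_sqrtOneSub_ne_zero hz), phiBranch, innerSum, one_mul, add_comm]

lemma sqrtOneSub_ofReal {x : ℝ} (hx : x ≤ 1) : sqrtOneSub x = (√(1 - x) : ℝ) := by
  rw [sqrtOneSub, Real.sqrt_eq_rpow, ← ofReal_one, ← ofReal_sub, ofReal_cpow (by linarith)]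
  norm_num

lemma im_sqrtOneSub_nonpos_of_im_pos {z : ℂ} (him : 0 < z.im) : (sqrtOneSub z).im ≤ 0 := by
  rw [sqrtOneSub, cpow_inv_two_im_eq_neg_sqrt (by simpa using him), neg_nonpos]
  positivity

lemma im_sqrtOneSub_ne_zero {z : ℂ} (him : z.im ≠ 0) : (sqrtOneSub z).im ≠ 0 := by
  intro h
  apply him
  simpa [sq, h] using congrArg im (sqrtOneSub_sq z)

lemma continuousAt_sqrtOneSub {z : ℂ} (hz : 1 - z ∈ slitPlane) : ContinuousAt sqrtOneSub z :=
  (continuousAt_const.sub continuousAt_id).cpow continuousAt_const hz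

lemma hasDerivAt_sqrtOneSub {z : ℂ} (hz : 1 - z ∈ slitPlane) :
    HasDerivAt sqrtOneSub (-(2 * sqrtOneSub z)⁻¹) z := by
  have hsqrt : HasDerivAt (· ^ (2⁻¹ : ℂ)) (2 * sqrtOneSub z)⁻¹ (1 - z) := by
    simpa [sqrtOneSub] using hasDerivAt_cpow_inv_nat two_ne_zero hz
  exact (hsqrt.comp z ((hasDerivAt_id z).const_sub 1)).congr_deriv (by simp)

lemma norm_sqrtOneSub_sq (z : ℂ) : ‖sqrtOneSub z‖ ^ 2 = ‖1 - z‖ := by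
  rw [← norm_pow, sqrtOneSub_sq]

lemma norm_sqrtOneSub_le {z : ℂ} (hz : ‖z‖ ≤ 1) : ‖sqrtOneSub z‖ ≤ 2 := by
  have := norm_sub_le 1 z
  rw [norm_one, ← norm_sqrtOneSub_sq] at this
  nlinarith [norm_nonneg (sqrtOneSub z)]

lemma half_le_norm_sqrtOneSub {z : ℂ} (hz : ‖z‖ ≤ 1 / 2) : 1 / 2 ≤ ‖sqrtOneSub z‖ := by
  have := norm_sub_norm_le 1 z
  rw [norm_one, ← norm_sqrtOneSub_sq] at this
  nlinarith [norm_nonneg (sqrtOneSub z)]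

lemma one_le_norm_neg_one_sub_sqrtOneSub (z : ℂ) : 1 ≤ ‖-1 - sqrtOneSub z‖ := by
  have hre : 0 ≤ (sqrtOneSub z).re := by rw [sqrtOneSub, cpow_inv_two_re]; positivity
  calc (1 : ℝ) ≤ (1 + sqrtOneSub z).re := by simpa using hre
    _ ≤ ‖1 + sqrtOneSub z‖ := re_le_norm _
    _ = ‖-1 - sqrtOneSub z‖ := by rw [← norm_neg, neg_add']

lemma norm_div_three_le_norm_neg_one_add_sqrtOneSub {z : ℂ} (hz : ‖z‖ ≤ 1) :
    ‖z‖ / 3 ≤ ‖-1 + sqrtOneSub z‖ := by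
  have hq : ‖-1 - sqrtOneSub z‖ ≤ 3 := by
    have := norm_sub_le (-1) (sqrtOneSub z)
    rw [norm_neg, norm_one] at this
    linarith [norm_sqrtOneSub_le hz]
  have := norm_mul (-1 + sqrtOneSub z) (-1 - sqrtOneSub z)
  rw [neg_one_add_sqrtOneSub_mul] at this
  rw [this, div_le_iff₀ three_pos]
  gcongr

lemma hasDerivAt_innerSum (a b : ℂ) {z : ℂ} (him : z.im ≠ 0) :
    HasDerivAt (innerSum a b) (-(2 * sqrtOneSub z)⁻¹ *
      (a * (3 * ((-1 + sqrtOneSub z) ^ (3⁻¹ : ℂ)) ^ 2)⁻¹ -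
        b * (3 * ((-1 - sqrtOneSub z) ^ (3⁻¹ : ℂ)) ^ 2)⁻¹)) z := by
  have hv := hasDerivAt_sqrtOneSub (z := z) (mem_slitPlane_iff.2 (Or.inr (by simpa using him)))
  have hvim := im_sqrtOneSub_ne_zero him
  have hplus := (hasDerivAt_cpow_inv_three
    (mem_slitPlane_iff.2 (Or.inr (by simpa using hvim)))).comp z (hv.const_add (-1))
  have hminus := (hasDerivAt_cpow_inv_three
    (mem_slitPlane_iff.2 (Or.inr (by simpa using hvim)))).comp z (hv.const_sub (-1))
  exact ((hplus.const_mul a).add (hminus.const_mul b)).congr_deriv (by ring)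

lemma norm_innerSum_le {a b z : ℂ} (ha : ‖a‖ ≤ 1) (hb : ‖b‖ ≤ 1) (hz : ‖z‖ ≤ 1) :
    ‖innerSum a b z‖ ≤ 4 := by
  have hv := norm_sqrtOneSub_le hz
  have hplus : ‖(-1 + sqrtOneSub z) ^ (3⁻¹ : ℂ)‖ ≤ 2 := by
    refine norm_cpow_inv_three_le zero_le_two ((norm_add_le _ _).trans ?_)
    rw [norm_neg, norm_one]
    linarith
  have hminus : ‖(-1 - sqrtOneSub z) ^ (3⁻¹ : ℂ)‖ ≤ 2 := by
    refine norm_cpow_inv_three_le zero_le_two ((norm_sub_le _ _).trans ?_)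
    rw [norm_neg, norm_one]
    linarith
  calc ‖innerSum a b z‖
      ≤ ‖a‖ * ‖(-1 + sqrtOneSub z) ^ (3⁻¹ : ℂ)‖ + ‖b‖ * ‖(-1 - sqrtOneSub z) ^ (3⁻¹ : ℂ)‖ := by
        rw [innerSum, ← norm_mul, ← norm_mul]; exact norm_add_le _ _
    _ ≤ 1 * 2 + 1 * 2 := by gcongr
    _ = 4 := by norm_num

lemma norm_deriv_innerSum_le {a b z : ℂ} (ha : ‖a‖ ≤ 1) (hb : ‖b‖ ≤ 1) (him : z.im ≠ 0)
    (hz : ‖z‖ ≤ 1 / 2) :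
    ‖deriv (innerSum a b) z‖ ≤ 4 / (3 * ‖z ^ (3⁻¹ : ℂ)‖ ^ 2) + 1 / 3 := by
  have hz₀ : z ≠ 0 := by rintro rfl; simp at him
  set t := ‖z ^ (3⁻¹ : ℂ)‖
  have ht : 0 < t := norm_pos_iff.2 ((cpow_ne_zero_iff_of_exponent_ne_zero (by norm_num)).2 hz₀)
  have hv : ‖(2 * sqrtOneSub z)⁻¹‖ ≤ 1 := by
    rw [norm_inv, norm_mul, Complex.norm_two]
    exact inv_le_one_of_one_le₀ (by linarith [half_le_norm_sqrtOneSub hz])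
  have hplus : t / 2 ≤ ‖(-1 + sqrtOneSub z) ^ (3⁻¹ : ℂ)‖ := by
    refine le_norm_cpow_inv_three (by positivity) (le_trans ?_
      (norm_div_three_le_norm_neg_one_add_sqrtOneSub (hz.trans (by norm_num))))
    rw [← show t ^ 3 = ‖z‖ from norm_cpow_inv_three_pow z]
    linarith [pow_pos ht 3, show (t / 2) ^ 3 = t ^ 3 / 8 by ring]
  have hminus : 1 ≤ ‖(-1 - sqrtOneSub z) ^ (3⁻¹ : ℂ)‖ :=
    le_norm_cpow_inv_three zero_le_one (by simpa using one_le_norm_neg_one_sub_sqrtOneSub z)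
  rw [(hasDerivAt_innerSum a b him).deriv]
  calc _ ≤ 1 * (1 * (3 * (t / 2) ^ 2)⁻¹ + 1 * (3 * 1 ^ 2)⁻¹) := by
        rw [norm_mul, norm_neg]
        refine mul_le_mul hv ((norm_sub_le _ _).trans ?_) (norm_nonneg _) zero_le_one
        simp only [norm_mul, norm_inv, norm_pow, RCLike.norm_ofNat]
        gcongr
    _ = 4 / (3 * t ^ 2) + 1 / 3 := by field_simp; ring

lemma one_le_norm_phiBranch {a b z : ℂ} (ha : ‖a‖ ≤ 1) (hb : ‖b‖ ≤ 1) (hz : ‖z‖ ≤ 1 / 512) :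
    1 ≤ ‖phiBranch a b z‖ := by
  have hW : ‖3 * ω₃ / 2 * z ^ (3⁻¹ : ℂ) * innerSum a b z‖ ≤ 3 / 4 := by
    have hS := norm_innerSum_le ha hb (hz.trans (by norm_num))
    have ht : ‖z ^ (3⁻¹ : ℂ)‖ ≤ 1 / 8 :=
      norm_cpow_inv_three_le (by norm_num) (by norm_num; linarith)
    simp only [norm_mul, norm_div, norm_ω₃, RCLike.norm_ofNat]
    calc _ ≤ (3 : ℝ) * 1 / 2 * (1 / 8) * 4 := by gcongr
      _ = 3 / 4 := by norm_num
  have := norm_sub_norm_le 1 (3 * ω₃ / 2 * z ^ (3⁻¹ : ℂ) * innerSum a b z)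
  rw [norm_one] at this
  rw [phiBranch, norm_mul, norm_sub_rev, show ‖(27 / 4 : ℂ)‖ = 27 / 4 by norm_num]
  linarith

lemma norm_deriv_phiBranch_le {a b z : ℂ} (ha : ‖a‖ ≤ 1) (hb : ‖b‖ ≤ 1) (him : z.im ≠ 0)
    (hz : ‖z‖ ≤ 1 / 512) : ‖deriv (phiBranch a b) z‖ ≤ 17 * ‖z‖ ^ (-(2 : ℝ) / 3) := by
  have hz₀ : z ≠ 0 := by rintro rfl; simp at him
  set t := ‖z ^ (3⁻¹ : ℂ)‖
  have ht : 0 < t := norm_pos_iff.2 ((cpow_ne_zero_iff_of_exponent_ne_zero (by norm_num)).2 hz₀)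
  have ht₈ : t ≤ 1 / 8 := norm_cpow_inv_three_le (by norm_num) (by norm_num; linarith)
  have hS := norm_innerSum_le ha hb (hz.trans (by norm_num))
  have hS' := norm_deriv_innerSum_le ha hb him (hz.trans (by norm_num))
  have hD : HasDerivAt (phiBranch a b) (81 / 8 * ω₃ * ((3 * (z ^ (3⁻¹ : ℂ)) ^ 2)⁻¹ *
      innerSum a b z + z ^ (3⁻¹ : ℂ) * deriv (innerSum a b) z)) z :=
    (((((hasDerivAt_cpow_inv_three (mem_slitPlane_iff.2 (Or.inr him))).const_mul
      (3 * ω₃ / 2)).mul (hasDerivAt_innerSum a b him).differentiableAt.hasDerivAt).sub_const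
        1).const_mul (27 / 4)).congr_deriv (by ring)
  rw [hD.deriv, ← inv_norm_cpow_inv_three_sq]
  calc _ ≤ 81 / 8 * 1 * ((3 * t ^ 2)⁻¹ * 4 + t * (4 / (3 * t ^ 2) + 1 / 3)) := by
        simp only [norm_mul, norm_div, norm_ω₃, RCLike.norm_ofNat]
        gcongr
        refine (norm_add_le _ _).trans ?_
        simp only [norm_mul, norm_inv, norm_pow, RCLike.norm_ofNat]
        gcongr
    _ ≤ 17 * (t ^ 2)⁻¹ := by
        field_simp
        nlinarith

lemma phiBranch_ω₃_one_ne_phiBranch_one_ω₃ {z : ℂ} (hz₀ : z ≠ 0) (hz₁ : z ≠ 1) :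
    phiBranch ω₃ 1 z ≠ phiBranch 1 ω₃ z := by
  have hroots : (-1 + sqrtOneSub z) ^ (3⁻¹ : ℂ) ≠ (-1 - sqrtOneSub z) ^ (3⁻¹ : ℂ) := by
    intro h
    have hcubes := congrArg (· ^ 3) h
    simp only [cpow_ofNat_inv_pow] at hcubes
    have hv : sqrtOneSub z = 0 := by linear_combination hcubes / 2
    exact hz₁ (by linear_combination sqrtOneSub_sq z - sqrtOneSub z * hv)
  have hz3 : z ^ (3⁻¹ : ℂ) ≠ 0 := (cpow_ne_zero_iff_of_exponent_ne_zero (by norm_num)).2 hz₀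
  have hω : ω₃ ≠ 0 := exp_ne_zero _
  intro h
  have : 81 / 8 * ω₃ * z ^ (3⁻¹ : ℂ) * (ω₃ - 1) *
      ((-1 + sqrtOneSub z) ^ (3⁻¹ : ℂ) - (-1 - sqrtOneSub z) ^ (3⁻¹ : ℂ)) = 0 := by
    simp only [phiBranch, innerSum] at h
    linear_combination h
  simp [hz3, hω, sub_eq_zero, ω₃_ne_one, hroots] at this

lemma continuousWithinAt_phiBranch_one_ω₃ {x : ℝ} (hx : x < 0) :
    ContinuousWithinAt (phiBranch 1 ω₃) {w | 0 < w.im} x := by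
  have hsqrt : 1 < √(1 - x) := Real.lt_sqrt_of_sq_lt (by linarith)
  have hplus₀ : -1 + sqrtOneSub x = ((√(1 - x) - 1 : ℝ) : ℂ) := by
    rw [sqrtOneSub_ofReal (by linarith)]; push_cast; ring
  have hminus₀ : -1 - sqrtOneSub x = ((-1 - √(1 - x) : ℝ) : ℂ) := by
    rw [sqrtOneSub_ofReal (by linarith)]; push_cast; ring
  have hv : ContinuousAt sqrtOneSub x := continuousAt_sqrtOneSub
    (mem_slitPlane_iff.2 (Or.inl (by rw [sub_re, one_re, ofReal_re]; linarith)))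
  have hz3 : ContinuousWithinAt (· ^ (3⁻¹ : ℂ)) {w : ℂ | 0 < w.im} x :=
    (continuousWithinAt_cpow_const_of_re_neg_of_im_zero (by simpa using hx) (by simp) _).mono
      fun w (hw : 0 < w.im) => (hw.le : 0 ≤ w.im)
  have hplus : ContinuousAt (fun w => (-1 + sqrtOneSub w) ^ (3⁻¹ : ℂ)) x := by
    refine (continuousAt_const.add hv).cpow continuousAt_const (mem_slitPlane_iff.2 (Or.inl ?_))
    change 0 < (-1 + sqrtOneSub x).re
    rw [hplus₀, ofReal_re]
    linarith
  have hminus : ContinuousWithinAt (fun w => (-1 - sqrtOneSub w) ^ (3⁻¹ : ℂ))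
      {w : ℂ | 0 < w.im} x :=
    ContinuousWithinAt.comp (t := {w : ℂ | 0 ≤ w.im})
      (continuousWithinAt_cpow_const_of_re_neg_of_im_zero
        (by rw [hminus₀, ofReal_re]; linarith) (by rw [hminus₀, ofReal_im]) _)
      (continuousAt_const.sub hv).continuousWithinAt
      fun w hw => by simpa using im_sqrtOneSub_nonpos_of_im_pos hw
  exact continuousWithinAt_const.mul (((continuousWithinAt_const.mul hz3).mul
    ((continuousWithinAt_const.mul hplus.continuousWithinAt).add
      (continuousWithinAt_const.mul hminus))).sub continuousWithinAt_const)

lemma not_continuousAt_phi_ofReal {x : ℝ} (hx : x < 0) : ¬ ContinuousAt phi x := by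
  intro hcont
  have hx₀ : (x : ℂ) ≠ 0 := by exact_mod_cast hx.ne
  have hx₁ : (x : ℂ) ≠ 1 := by exact_mod_cast (hx.trans one_pos).ne
  have : (𝓝[{w : ℂ | 0 < w.im}] (x : ℂ)).NeBot := mem_closure_iff_nhdsWithin_neBot.1 (by simp)
  have hlim : Tendsto phi (𝓝[{w : ℂ | 0 < w.im}] x) (𝓝 (phiBranch 1 ω₃ x)) :=
    (continuousWithinAt_phiBranch_one_ω₃ hx).tendsto.congr'
      (eventually_nhdsWithin_of_forall fun w hw => (phi_eq_phiBranch_of_im_pos hw).symm)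
  apply phiBranch_ω₃_one_ne_phiBranch_one_ω₃ hx₀ hx₁
  rw [← phi_eq_phiBranch_of_im_nonpos hx₀ (by simp)]
  exact tendsto_nhds_unique hcont.continuousWithinAt hlim

lemma phi_eventuallyEq_phiBranch {z : ℂ} (him : z.im ≠ 0) :
    ∃ a b : ℂ, ‖a‖ ≤ 1 ∧ ‖b‖ ≤ 1 ∧ phi =ᶠ[𝓝 z] phiBranch a b := by
  rcases him.lt_or_gt with him | him
  · refine ⟨ω₃, 1, norm_ω₃.le, norm_one.le, ?_⟩
    filter_upwards [(isOpen_lt continuous_im continuous_const).mem_nhds him] with w hw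
    exact phi_eq_phiBranch_of_im_nonpos (by rintro rfl; simp at hw) (le_of_lt hw)
  · refine ⟨1, ω₃, norm_one.le, norm_ω₃.le, ?_⟩
    filter_upwards [(isOpen_lt continuous_const continuous_im).mem_nhds him] with w hw
    exact phi_eq_phiBranch_of_im_pos hw

lemma norm_deriv_phi_div_phi_le {z : ℂ} (him : z.im ≠ 0) (hz : ‖z‖ ≤ 1 / 512) :
    ‖deriv phi z / phi z‖ ≤ 17 * ‖z‖ ^ (-(2 : ℝ) / 3) := by
  obtain ⟨a, b, ha, hb, hphi⟩ := phi_eventuallyEq_phiBranch him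
  rw [hphi.deriv_eq, hphi.eq_of_nhds, norm_div]
  exact (div_le_self (norm_nonneg _) (one_le_norm_phiBranch ha hb hz)).trans
    (norm_deriv_phiBranch_le ha hb him hz)

/-- near the branch point `0`, `|phi'/phi|` is `O(ε^(-2/3))`. -/
theorem phi_logderiv_near_zero :
    ∃ C > (0 : ℝ), ∃ ε₀ > (0 : ℝ), ∀ ε : ℝ, ε ∈ Set.Ioo 0 ε₀ →
      ∀ θ ∈ Set.Ioo (0 : ℝ) (2 * Real.pi),
        ‖(deriv phi ((ε : ℂ) * Complex.exp (Complex.I * (θ : ℂ))) /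
            phi ((ε : ℂ) * Complex.exp (Complex.I * (θ : ℂ))))‖
          ≤ C * ε ^ (-(2 : ℝ) / 3) := by
  refine ⟨17, by norm_num, 1 / 512, by norm_num, ?_⟩
  rintro ε ⟨hε, hε₀⟩ θ ⟨hθ₀, hθ₂π⟩
  rcases eq_or_ne θ π with rfl | hθ
  · have hz : (ε : ℂ) * exp (I * π) = ((-ε : ℝ) : ℂ) := by
      rw [mul_comm I, exp_pi_mul_I]; push_cast; ring
    have hnd : ¬ DifferentiableAt ℂ phi ((-ε : ℝ) : ℂ) := fun h =>
      not_continuousAt_phi_ofReal (neg_neg_of_pos hε) h.continuousAt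
    rw [hz, deriv_zero_of_not_differentiableAt hnd, zero_div, norm_zero]
    positivity
  · have hnorm : ‖(ε : ℂ) * exp (I * θ)‖ = ε := by
      rw [norm_mul, mul_comm I, norm_exp_ofReal_mul_I, mul_one, norm_real,
        Real.norm_of_nonneg hε.le]
    have hsin : Real.sin θ ≠ 0 := by
      rcases hθ.lt_or_gt with hθ | hθ
      · exact (Real.sin_pos_of_pos_of_lt_pi hθ₀ hθ).ne'
      · rw [← Real.sin_sub_two_pi]
        exact (Real.sin_neg_of_neg_of_neg_pi_lt (by linarith) (by linarith)).ne
    have him : ((ε : ℂ) * exp (I * θ)).im ≠ 0 := by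
      rw [mul_comm I, im_ofReal_mul, exp_ofReal_mul_I_im]
      exact mul_ne_zero hε.ne' hsin
    simpa only [hnorm] using norm_deriv_phi_div_phi_le him (hnorm.trans_le hε₀.le)
end

section
/- The function w(x) = (√3/(4π))·((1+√(1−x))^{1/3} + (1−√(1−x))^{1/3})/(x^{2/3}·√(1−x)) on (0,1) (with real roots of positive reals) is the density of a probability measure: w(x) > 0 for all x ∈ (0,1) and ∫_0^1 w(x) dx = 1. -/
open Filter Topology Polynomial

/-!
Substituting `x = 1 - t²` turns `w x dx` on `(0, 1)` into `(√3 / 2π) (G t + G (-t)) dt` with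
`G t = (1 + t) ^ (-1/3) (1 - t) ^ (-2/3)`, so the integral equals `(√3 / 2π) ∫_{-1}^{1} G`.
The affine change `t = 2u - 1` identifies this with the Beta integral
`B(2/3, 1/3) = Γ(2/3) Γ(1/3) = π / sin (π/3) = 2π / √3`.
-/

open MeasureTheory Real Set

namespace Real

theorem integral_rpow_mul_one_sub_rpow {a b : ℝ} (ha : 0 < a) (hb : 0 < b) :
    ∫ x in (0 : ℝ)..1, x ^ (a - 1) * (1 - x) ^ (b - 1) = Gamma a * Gamma b / Gamma (a + b) := by
  have hbeta := Complex.Gamma_mul_Gamma_eq_betaIntegral (s := a) (t := b) (by simpa) (by simpa)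
  have hcast : Complex.betaIntegral a b =
      ((∫ x in (0 : ℝ)..1, x ^ (a - 1) * (1 - x) ^ (b - 1) : ℝ) : ℂ) := by
    rw [Complex.betaIntegral, ← intervalIntegral.integral_ofReal]
    refine intervalIntegral.integral_congr fun x hx => ?_
    rw [uIcc_of_le zero_le_one] at hx
    push_cast [Complex.ofReal_cpow hx.1, Complex.ofReal_cpow (sub_nonneg.2 hx.2)]
    rfl
  rw [hcast, ← Complex.ofReal_add, Complex.Gamma_ofReal, Complex.Gamma_ofReal,
    Complex.Gamma_ofReal] at hbeta
  rw [eq_div_iff (Gamma_pos_of_pos (add_pos ha hb)).ne', mul_comm]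
  exact_mod_cast hbeta.symm

theorem integral_one_add_rpow_mul_one_sub_rpow {a b : ℝ} (ha : 0 < a) (hb : 0 < b) :
    ∫ t in (-1 : ℝ)..1, (1 + t) ^ (a - 1) * (1 - t) ^ (b - 1) =
      2 ^ (a + b - 1) * (Gamma a * Gamma b / Gamma (a + b)) := by
  have hsub := intervalIntegral.smul_integral_comp_mul_sub (a := 0) (b := 1)
    (fun t : ℝ => (1 + t) ^ (a - 1) * (1 - t) ^ (b - 1)) 2 1
  rw [show (2 : ℝ) * 0 - 1 = -1 by norm_num, show (2 : ℝ) * 1 - 1 = 1 by norm_num,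
    smul_eq_mul] at hsub
  have hscale : ∫ u in (0 : ℝ)..1, (1 + (2 * u - 1)) ^ (a - 1) * (1 - (2 * u - 1)) ^ (b - 1) =
      2 ^ (a + b - 2) * ∫ u in (0 : ℝ)..1, u ^ (a - 1) * (1 - u) ^ (b - 1) := by
    rw [← intervalIntegral.integral_const_mul]
    refine intervalIntegral.integral_congr fun u hu => ?_
    rw [uIcc_of_le zero_le_one] at hu
    rw [show 1 + (2 * u - 1) = 2 * u by ring, show 1 - (2 * u - 1) = 2 * (1 - u) by ring,
      mul_rpow zero_le_two hu.1, mul_rpow zero_le_two (sub_nonneg.2 hu.2),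
      show a + b - 2 = (a - 1) + (b - 1) by ring, rpow_add two_pos]
    ring
  rw [← hsub, hscale, integral_rpow_mul_one_sub_rpow ha hb,
    show a + b - 1 = 1 + (a + b - 2) by ring, rpow_add two_pos, rpow_one]
  ring

theorem intervalIntegrable_one_add_rpow_mul_one_sub_rpow {a b : ℝ} (ha : 0 < a) (hb : 0 < b) :
    IntervalIntegrable (fun t : ℝ => (1 + t) ^ (a - 1) * (1 - t) ^ (b - 1)) volume (-1) 1 := by
  refine intervalIntegral.intervalIntegrable_of_integral_ne_zero ?_
  rw [integral_one_add_rpow_mul_one_sub_rpow ha hb]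
  have := Gamma_pos_of_pos ha
  have := Gamma_pos_of_pos hb
  have := Gamma_pos_of_pos (add_pos ha hb)
  positivity

theorem Gamma_two_thirds_mul_Gamma_one_third : Gamma (2 / 3) * Gamma (1 / 3) = 2 * π / √3 := by
  rw [mul_comm, show (2 / 3 : ℝ) = 1 - 1 / 3 by norm_num, Gamma_mul_Gamma_one_sub,
    show π * (1 / 3) = π / 3 by ring, sin_pi_div_three]
  field_simp

theorem rpow_two_thirds_eq_sq {x : ℝ} (hx : 0 ≤ x) :
    x ^ (2 / 3 : ℝ) = (x ^ (1 / 3 : ℝ)) ^ 2 := by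
  rw [← rpow_natCast, ← rpow_mul hx]
  norm_num

end Real

namespace intervalIntegral

variable {E : Type*} [NormedAddCommGroup E] [NormedSpace ℝ E]

theorem integral_add_comp_neg {f : ℝ → E} {a : ℝ} (hf : IntervalIntegrable f volume (-a) a) :
    ∫ t in (0 : ℝ)..a, (f t + f (-t)) = ∫ t in -a..a, f t := by
  have h0 : (0 : ℝ) ∈ uIcc (-a) a := by
    rcases le_total 0 a with h | h
    · exact mem_uIcc_of_le (by linarith) h
    · exact mem_uIcc_of_ge h (by linarith)
  have hleft : IntervalIntegrable f volume (-a) 0 :=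
    hf.mono_set (uIcc_subset_uIcc left_mem_uIcc h0)
  have hright : IntervalIntegrable f volume 0 a :=
    hf.mono_set (uIcc_subset_uIcc h0 right_mem_uIcc)
  have hneg : IntervalIntegrable (fun t => f (-t)) volume 0 a := by
    simpa using ((IntervalIntegrable.iff_comp_neg).mp hleft).symm
  rw [integral_add hright hneg, integral_comp_neg, neg_zero, add_comm,
    integral_add_adjacent_intervals hleft hright]

theorem integral_comp_one_sub_sq_smul (f : ℝ → E) :
    ∫ t in (0 : ℝ)..1, (2 * t) • f (1 - t ^ 2) = ∫ x in (0 : ℝ)..1, f x := by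
  have himage : (fun t : ℝ => 1 - t ^ 2) '' Ioo 0 1 = Ioo 0 1 := by
    ext x
    constructor
    · rintro ⟨t, ⟨ht0, ht1⟩, rfl⟩
      constructor <;> nlinarith
    · rintro ⟨hx0, hx1⟩
      have hroot : √(1 - x) < 1 := (sqrt_lt' one_pos).2 (by linarith)
      refine ⟨√(1 - x), ⟨sqrt_pos.2 (by linarith), hroot⟩, ?_⟩
      simp only [sq_sqrt (by linarith : 0 ≤ 1 - x), sub_sub_cancel]
  have hderiv : ∀ t ∈ Ioo (0 : ℝ) 1,
      HasDerivWithinAt (fun t : ℝ => 1 - t ^ 2) (-(2 * t)) (Ioo 0 1) t := fun t _ => by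
    simpa using ((hasDerivAt_pow 2 t).const_sub 1).hasDerivWithinAt
  have hinj : InjOn (fun t : ℝ => 1 - t ^ 2) (Ioo 0 1) := by
    rintro s ⟨hs, -⟩ t ⟨ht, -⟩ hst
    simp only [sub_right_inj] at hst
    exact (pow_left_inj₀ hs.le ht.le two_ne_zero).1 hst
  rw [integral_of_le zero_le_one, integral_of_le zero_le_one,
    integral_Ioc_eq_integral_Ioo, integral_Ioc_eq_integral_Ioo]
  conv_rhs =>
    rw [← himage, integral_image_eq_integral_abs_deriv_smul measurableSet_Ioo hderiv hinj]
  refine setIntegral_congr_fun measurableSet_Ioo fun t ht => ?_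
  rw [abs_neg, abs_of_pos (by linarith [ht.1] : (0 : ℝ) < 2 * t)]

end intervalIntegral

theorem two_mul_mul_w_one_sub_sq {t : ℝ} (h0 : 0 < t) (h1 : t < 1) :
    2 * t * w (1 - t ^ 2) = √3 / (2 * π) *
      ((1 + t) ^ (-(1 / 3) : ℝ) * (1 - t) ^ (-(2 / 3) : ℝ) +
        (1 - t) ^ (-(1 / 3) : ℝ) * (1 + t) ^ (-(2 / 3) : ℝ)) := by
  have hp : 0 < 1 + t := by linarith
  have hq : 0 < 1 - t := by linarith
  have hroot : √(1 - (1 - t ^ 2)) = t := by rw [sub_sub_cancel, sqrt_sq h0.le]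
  have hpow : (1 - t ^ 2) ^ (2 / 3 : ℝ) = (1 + t) ^ (2 / 3 : ℝ) * (1 - t) ^ (2 / 3 : ℝ) := by
    rw [← mul_rpow hp.le hq.le]
    ring_nf
  have := rpow_pos_of_pos hp (1 / 3)
  have := rpow_pos_of_pos hq (1 / 3)
  rw [w, hroot, hpow, rpow_neg hp.le, rpow_neg hq.le, rpow_neg hp.le, rpow_neg hq.le,
    rpow_two_thirds_eq_sq hp.le, rpow_two_thirds_eq_sq hq.le]
  field_simp
  ring

theorem w_pos {x : ℝ} (h0 : 0 < x) (h1 : x < 1) : 0 < w x := by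
  have hroot : √(1 - x) < 1 := (sqrt_lt' one_pos).2 (by linarith)
  have := rpow_pos_of_pos (sub_pos.2 hroot) (1 / 3)
  have := sqrt_pos.2 (sub_pos.2 h1)
  unfold w
  positivity

/-- `w` is the density of a probability measure on `(0,1)`:
it is positive there and integrates to `1`. -/
theorem w_probability_density :
    (∀ x ∈ Set.Ioo (0 : ℝ) 1, 0 < w x) ∧ (∫ x in (0 : ℝ)..1, w x) = 1 := by
  refine ⟨fun x hx => w_pos hx.1 hx.2, ?_⟩
  set G : ℝ → ℝ := fun t => (1 + t) ^ ((2 / 3 : ℝ) - 1) * (1 - t) ^ ((1 / 3 : ℝ) - 1)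
  have hG : IntervalIntegrable G volume (-1) 1 :=
    intervalIntegrable_one_add_rpow_mul_one_sub_rpow (by norm_num) (by norm_num)
  calc ∫ x in (0 : ℝ)..1, w x = ∫ t in (0 : ℝ)..1, (2 * t) • w (1 - t ^ 2) :=
        (intervalIntegral.integral_comp_one_sub_sq_smul w).symm
    _ = ∫ t in (0 : ℝ)..1, √3 / (2 * π) * (G t + G (-t)) :=
        intervalIntegral.integral_congr_Ioo_of_le zero_le_one fun t ht => by
          simp only [smul_eq_mul, G, two_mul_mul_w_one_sub_sq ht.1 ht.2, ← sub_eq_add_neg,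
            sub_neg_eq_add]
          norm_num
    _ = √3 / (2 * π) * ∫ t in (-1 : ℝ)..1, G t := by
        rw [intervalIntegral.integral_const_mul, intervalIntegral.integral_add_comp_neg hG]
    _ = 1 := by
        rw [integral_one_add_rpow_mul_one_sub_rpow (by norm_num) (by norm_num)]
        norm_num [Gamma_two_thirds_mul_Gamma_one_third]
end

section
/- For every y ∈ (0,1), ∫_y^1 u^{−1}·w(u) du = (3√3/(16π))·[ (1+3√(1−y))·(1−√(1−y))^{1/3} − (1−3√(1−y))·(1+√(1−y))^{1/3} ]/y^{2/3}, where w(u) = (√3/(4π))·((1+√(1−u))^{1/3} + (1−√(1−u))^{1/3})/(u^{2/3}·√(1−u)) and all roots are real roots of positive reals. -/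
/-!
The right-hand side, as a function `wTail` of `y`, vanishes at `y = 1` and has derivative
`-y⁻¹ * w y` on `(0, 1)`, so the identity is the fundamental theorem of calculus. The integrand
blows up like `(1 - u) ^ (-1/2)` at `u = 1`; its integrability comes for free because it is
nonnegative and has a primitive continuous on `[y, 1]`.
-/

open Filter Topology Polynomial

open Set MeasureTheory intervalIntegral Real

theorem intervalIntegral.integral_eq_sub_of_hasDerivAt_of_nonneg {f f' : ℝ → ℝ} {a b : ℝ}
    (hab : a ≤ b) (hcont : ContinuousOn f (Icc a b))
    (hderiv : ∀ x ∈ Ioo a b, HasDerivAt f (f' x) x) (hpos : ∀ x ∈ Ioo a b, 0 ≤ f' x) :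
    ∫ x in a..b, f' x = f b - f a :=
  integral_eq_sub_of_hasDerivAt_of_le hab hcont hderiv <|
    (intervalIntegrable_iff_integrableOn_Ioc_of_le hab).2
      (integrableOn_deriv_of_nonneg hcont hderiv hpos)

theorem HasDerivAt.rpow_const_of_ne_zero {f : ℝ → ℝ} {f' x p : ℝ} (hf : HasDerivAt f f' x)
    (hx : f x ≠ 0) : HasDerivAt (fun y => f y ^ p) (p * f' * f x ^ p / f x) x := by
  convert hf.rpow_const (p := p) (Or.inl hx) using 1
  rw [rpow_sub_one hx]
  ring

lemma w_nonneg {x : ℝ} (hx : 0 ≤ x) : 0 ≤ w x := by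
  have : √(1 - x) ≤ 1 := sqrt_le_one.2 (by linarith)
  have : 0 ≤ (1 - √(1 - x)) ^ ((1 : ℝ) / 3) := rpow_nonneg (by linarith) _
  unfold w
  positivity

noncomputable def wTail (x : ℝ) : ℝ :=
  (3 * √3 / (16 * π)) *
    (((1 + 3 * √(1 - x)) * (1 - √(1 - x)) ^ ((1 : ℝ) / 3)
        - (1 - 3 * √(1 - x)) * (1 + √(1 - x)) ^ ((1 : ℝ) / 3))
      / x ^ ((2 : ℝ) / 3))

lemma wTail_one : wTail 1 = 0 := by
  simp [wTail]

lemma continuousOn_wTail : ContinuousOn wTail (Ioi 0) := by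
  refine continuousOn_const.mul (ContinuousOn.div (Continuous.continuousOn ?_) ?_ ?_)
  · fun_prop (disch := norm_num)
  · fun_prop (disch := norm_num)
  · exact fun x hx => (rpow_pos_of_pos hx _).ne'

lemma hasDerivAt_wTail {u : ℝ} (hu0 : 0 < u) (hu1 : u < 1) :
    HasDerivAt wTail (-(u⁻¹ * w u)) u := by
  have hs0 : 0 < √(1 - u) := sqrt_pos.2 (by linarith)
  have hs1 : 0 < 1 - √(1 - u) := sub_pos.2 ((sqrt_lt' one_pos).2 (by linarith))
  have hsqrt : HasDerivAt (fun x => √(1 - x)) (-1 / (2 * √(1 - u))) u := by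
    simpa using ((hasDerivAt_id u).const_sub 1).sqrt (by rw [id]; linarith)
  have hplus := (hsqrt.const_add 1).rpow_const_of_ne_zero (p := 1 / 3) (by positivity)
  have hminus := (hsqrt.const_sub 1).rpow_const_of_ne_zero (p := 1 / 3) hs1.ne'
  have hpow := (hasDerivAt_id u).rpow_const_of_ne_zero (p := 2 / 3) hu0.ne'
  have hnum := (((hsqrt.const_mul 3).const_add 1).mul hminus).sub
    (((hsqrt.const_mul 3).const_sub 1).mul hplus)
  refine ((hnum.div hpow (by positivity)).const_mul (3 * √3 / (16 * π)) :
    HasDerivAt wTail _ u).congr_deriv ?_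
  -- After `u = (1 - s) * (1 + s)` with `s = √(1 - u)`, no relation between the rpow terms is
  -- needed: the identity is rational in `s`, with those terms as free atoms.
  have hu : u = (1 - √(1 - u)) * (1 + √(1 - u)) := by
    linear_combination sq_sqrt (sub_nonneg.2 hu1.le)
  have : 0 < u ^ ((2 : ℝ) / 3) := by positivity
  simp only [id, w, Pi.mul_apply, Pi.sub_apply]
  generalize √(1 - u) = s at *
  rw [hu]
  field_simp
  ring

/-- the integral identity behind the density of the asymptotic zero
distribution of the multiple Laguerre polynomials of the first kind. -/
theorem integral_w_over_u (y : ℝ) (hy : y ∈ Set.Ioo (0 : ℝ) 1) :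
    ∫ u in y..1, u⁻¹ * w u
      = (3 * Real.sqrt 3 / (16 * Real.pi)) *
        (((1 + 3 * Real.sqrt (1 - y)) * (1 - Real.sqrt (1 - y)) ^ ((1 : ℝ) / 3)
            - (1 - 3 * Real.sqrt (1 - y)) * (1 + Real.sqrt (1 - y)) ^ ((1 : ℝ) / 3))
          / y ^ ((2 : ℝ) / 3)) := by
  obtain ⟨hy0, hy1⟩ := hy
  have hcont : ContinuousOn (-wTail) (Icc y 1) :=
    (continuousOn_wTail.mono fun x hx => hy0.trans_le hx.1).neg
  have hderiv : ∀ u ∈ Ioo y 1, HasDerivAt (-wTail) (u⁻¹ * w u) u := fun u hu => by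
    simpa only [neg_neg] using (hasDerivAt_wTail (hy0.trans hu.1) hu.2).neg
  have hnonneg : ∀ u ∈ Ioo y 1, 0 ≤ u⁻¹ * w u := fun u hu =>
    have hu0 : 0 < u := hy0.trans hu.1
    mul_nonneg (inv_nonneg.2 hu0.le) (w_nonneg hu0.le)
  rw [integral_eq_sub_of_hasDerivAt_of_nonneg hy1.le hcont hderiv hnonneg, Pi.neg_apply,
    Pi.neg_apply, wTail_one, neg_zero, zero_sub, neg_neg, wTail]
end
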